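/- The function v ↦ λ(v)·(λ(v) − v) tends to 0 as v → −∞ and tends to 1 as v → +∞. -/

import Mathlib

open MeasureTheory ProbabilityTheory Real Filter Set

noncomputable section

/-- The standard normal density `φ`. -/
def gPDF (t : ℝ) : ℝ := (Real.sqrt (2 * Real.pi))⁻¹ * Real.exp (-t ^ 2 / 2)

/-- The standard normal cumulative distribution function `Φ`. -/
def gCDF (t : ℝ) : ℝ := ∫ s in Set.Iic t, gPDF s

/-- The inverse Mills ratio `λ(v) = φ(v)/(1 - Φ(v))`. -/
def mills (v : ℝ) : ℝ := gPDF v / (1 - gCDF v)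

/-- Euclidean norm of a vector in `ℝ^n`. -/
def vnorm {n : ℕ} (x : Fin n → ℝ) : ℝ := Real.sqrt (∑ i, (x i) ^ 2)

/-- Frobenius (Euclidean) norm of a real matrix. -/
def frob {m n : Type*} [Fintype m] [Fintype n] (M : Matrix m n ℝ) : ℝ :=
  Real.sqrt (∑ i, ∑ j, (M i j) ^ 2)

/-- Dot product `xᵀδ`. -/
def dotp {n : ℕ} (x δ : Fin n → ℝ) : ℝ := ∑ i, x i * δ i

/-- The block matrix `[[x xᵀ, -y·x], [-y·xᵀ, γ⁻² + y²]]`. -/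
def blockA (K : ℕ) (x : Fin K → ℝ) (y γ : ℝ) :
    Matrix (Fin K ⊕ Unit) (Fin K ⊕ Unit) ℝ :=
  Matrix.fromBlocks (Matrix.vecMulVec x x) (Matrix.of fun i _ => -(y * x i))
    (Matrix.of fun _ j => -(y * x j)) (Matrix.of fun _ _ => γ⁻¹ ^ 2 + y ^ 2)

/-- The block matrix `[[x xᵀ, -c·x], [-c·xᵀ, c²]]`. -/
def blockB (K : ℕ) (x : Fin K → ℝ) (c : ℝ) :
    Matrix (Fin K ⊕ Unit) (Fin K ⊕ Unit) ℝ :=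
  Matrix.fromBlocks (Matrix.vecMulVec x x) (Matrix.of fun i _ => -(c * x i))
    (Matrix.of fun _ j => -(c * x j)) (Matrix.of fun _ _ => c ^ 2)

/-- The Hessian of the reparameterized log conditional likelihood of the truncated
regression model, `H(y, x; δ, γ)` with `v = γc - xᵀδ`. -/
def truncHess (K : ℕ) (c y : ℝ) (x δ : Fin K → ℝ) (γ : ℝ) :
    Matrix (Fin K ⊕ Unit) (Fin K ⊕ Unit) ℝ :=
  -(blockA K x y γ) +
    (mills (γ * c - dotp x δ) * (mills (γ * c - dotp x δ) - (γ * c - dotp x δ))) • blockB K x c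

/-- The Hessian of the reparameterized log conditional likelihood of the Tobit model,
`H(y, x, d; δ, γ)` with `v = γc - xᵀδ`. -/
def tobitHess (K : ℕ) (c y : ℝ) (x : Fin K → ℝ) (d : ℝ) (δ : Fin K → ℝ) (γ : ℝ) :
    Matrix (Fin K ⊕ Unit) (Fin K ⊕ Unit) ℝ :=
  -((1 - d) • blockA K x y γ) -
    (d * mills (-(γ * c - dotp x δ)) * (mills (-(γ * c - dotp x δ)) + (γ * c - dotp x δ))) •
      blockB K x c

/-- The score of the reparameterized log conditional likelihood of the Tobit model,
`s(y, x, d; δ, γ)` with `v = γc - xᵀδ`. -/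
def tobitScore (K : ℕ) (c y : ℝ) (x : Fin K → ℝ) (d : ℝ) (δ : Fin K → ℝ) (γ : ℝ) :
    Fin K ⊕ Unit → ℝ := fun j =>
  (1 - d) *
      Sum.elim (fun i => (γ * y - dotp x δ) * x i) (fun _ => 1 / γ - (γ * y - dotp x δ) * y) j
    + d * mills (-(γ * c - dotp x δ)) * Sum.elim (fun i => -x i) (fun _ => c) j


set_option maxHeartbeats 1000000
section MillsAux



lemma gPDF_pos (t : ℝ) : 0 < gPDF t := by
  unfold gPDF; positivity

lemma gPDF_cont : Continuous gPDF := by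
  unfold gPDF; fun_prop

lemma gPDF_integrable : Integrable gPDF := by
  have h := (integrable_exp_neg_mul_sq (by norm_num : (0:ℝ) < 1/2)).const_mul
    (Real.sqrt (2 * Real.pi))⁻¹
  refine h.congr (Eventually.of_forall fun t => ?_)
  unfold gPDF; ring_nf

lemma integral_gPDF : ∫ t, gPDF t = 1 := by
  have h : ∫ t : ℝ, Real.exp (-(1/2) * t ^ 2) = Real.sqrt (Real.pi / (1/2)) :=
    integral_gaussian (1/2)
  have h2 : ∀ t : ℝ, gPDF t = (Real.sqrt (2 * Real.pi))⁻¹ * Real.exp (-(1/2) * t ^ 2) := by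
    intro t; unfold gPDF; ring_nf
  rw [show (fun t => gPDF t) = fun t => (Real.sqrt (2 * Real.pi))⁻¹ * Real.exp (-(1/2) * t ^ 2)
    from funext h2, integral_const_mul, h]
  rw [show Real.pi / (1/2) = 2 * Real.pi by ring]
  rw [inv_mul_cancel₀ (by positivity)]

lemma hasDerivAt_gCDF (v : ℝ) : HasDerivAt gCDF (gPDF v) v := by
  have key : ∀ u : ℝ, gCDF u = gCDF 0 + ∫ t in (0:ℝ)..u, gPDF t := by
    intro u
    have := intervalIntegral.integral_Iic_sub_Iic (gPDF_integrable.integrableOn) (gPDF_integrable.integrableOn)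
      (a := 0) (b := u) (μ := volume)
    unfold gCDF; linarith
  have h := intervalIntegral.integral_hasDerivAt_right
    (gPDF_integrable.intervalIntegrable (a := 0) (b := v))
    gPDF_cont.stronglyMeasurable.stronglyMeasurableAtFilter
    gPDF_cont.continuousAt
  have h2 := h.const_add (gCDF 0)
  exact h2.congr_of_eventuallyEq (Eventually.of_forall fun u => (key u))

lemma tendsto_gCDF_atTop : Tendsto gCDF atTop (nhds 1) := by
  have h := intervalIntegral_tendsto_integral_Ioi 0 (gPDF_integrable.integrableOn (s := Ioi 0))
    tendsto_id (μ := volume)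
  have h2 : Tendsto (fun v : ℝ => gCDF 0 + ∫ t in (0:ℝ)..v, gPDF t) atTop
      (nhds (gCDF 0 + ∫ t in Ioi (0:ℝ), gPDF t)) := tendsto_const_nhds.add h
  have key : ∀ u : ℝ, gCDF u = gCDF 0 + ∫ t in (0:ℝ)..u, gPDF t := by
    intro u
    have := intervalIntegral.integral_Iic_sub_Iic (gPDF_integrable.integrableOn) (gPDF_integrable.integrableOn)
      (a := 0) (b := u) (μ := volume)
    unfold gCDF; linarith
  have heq : gCDF 0 + ∫ t in Ioi (0:ℝ), gPDF t = 1 := by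
    have := intervalIntegral.integral_Iic_add_Ioi (b := 0) (gPDF_integrable.integrableOn)
      (gPDF_integrable.integrableOn) (μ := volume)
    unfold gCDF; rw [this, integral_gPDF]
  rw [← heq]
  exact h2.congr fun u => (key u).symm

lemma tendsto_gCDF_atBot : Tendsto gCDF atBot (nhds 0) := by
  have h := intervalIntegral_tendsto_integral_Iic 0 (gPDF_integrable.integrableOn (s := Iic 0))
    tendsto_id (μ := volume)
  have h2 : Tendsto (fun v : ℝ => gCDF 0 - ∫ t in v..(0:ℝ), gPDF t) atBot
      (nhds (gCDF 0 - ∫ t in Iic (0:ℝ), gPDF t)) := tendsto_const_nhds.sub h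
  have : gCDF 0 - ∫ t in Iic (0:ℝ), gPDF t = 0 := by unfold gCDF; ring
  rw [← this]
  refine h2.congr fun u => ?_
  have := intervalIntegral.integral_Iic_sub_Iic (gPDF_integrable.integrableOn) (gPDF_integrable.integrableOn)
    (a := u) (b := 0) (μ := volume)
  unfold gCDF; linarith

lemma one_sub_gCDF_eq (v : ℝ) : 1 - gCDF v = ∫ t in Ioi v, gPDF t := by
  have := intervalIntegral.integral_Iic_add_Ioi (b := v) (gPDF_integrable.integrableOn)
    (gPDF_integrable.integrableOn) (μ := volume)
  unfold gCDF; rw [← integral_gPDF]; linarith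

lemma one_sub_gCDF_pos (v : ℝ) : 0 < 1 - gCDF v := by
  rw [one_sub_gCDF_eq]
  have h1 : ∫ t in Ioc v (v+1), gPDF t ≤ ∫ t in Ioi v, gPDF t := by
    apply setIntegral_mono_set (gPDF_integrable.integrableOn)
      (Eventually.of_forall fun t => (gPDF_pos t).le)
    exact Eventually.of_forall (Ioc_subset_Ioi_self)
  have h2 : 0 < ∫ t in Ioc v (v+1), gPDF t := by
    rw [← intervalIntegral.integral_of_le (by linarith)]
    apply intervalIntegral.intervalIntegral_pos_of_pos_on
      (gPDF_integrable.intervalIntegrable) (fun x _ => gPDF_pos x) (by linarith)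
  linarith

lemma hasDerivAt_gPDF (v : ℝ) : HasDerivAt gPDF (-v * gPDF v) v := by
  have h1 : HasDerivAt (fun t : ℝ => -t ^ 2 / 2) (-v) v := by
    have := ((hasDerivAt_pow 2 v).neg).div_const 2
    simpa using this.congr_deriv (by ring)
  have h2 := (h1.exp).const_mul (Real.sqrt (2 * Real.pi))⁻¹
  unfold gPDF
  refine h2.congr_deriv ?_
  ring

lemma tendsto_neg_sq_atBot_bot : Tendsto (fun v : ℝ => -v ^ 2 / 2) atBot atBot := by
  apply Tendsto.atBot_div_const (by norm_num : (0:ℝ) < 2)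
  apply tendsto_neg_atTop_atBot.comp
  have : Tendsto (fun v : ℝ => v ^ 2) atBot atTop := by
    have h := (tendsto_pow_atTop (two_ne_zero)).comp tendsto_neg_atBot_atTop (α := ℝ)
    refine h.congr fun v => by simp [neg_pow]
  exact this

lemma tendsto_neg_sq_atTop_bot : Tendsto (fun v : ℝ => -v ^ 2 / 2) atTop atBot := by
  apply Tendsto.atBot_div_const (by norm_num : (0:ℝ) < 2)
  exact tendsto_neg_atTop_atBot.comp (tendsto_pow_atTop two_ne_zero)

lemma tendsto_gPDF_atBot : Tendsto gPDF atBot (nhds 0) := by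
  have := (Real.tendsto_exp_atBot.comp tendsto_neg_sq_atBot_bot).const_mul
    (Real.sqrt (2 * Real.pi))⁻¹
  unfold gPDF
  simpa only [Function.comp_def, mul_zero] using this

lemma tendsto_gPDF_atTop : Tendsto gPDF atTop (nhds 0) := by
  have := (Real.tendsto_exp_atBot.comp tendsto_neg_sq_atTop_bot).const_mul
    (Real.sqrt (2 * Real.pi))⁻¹
  unfold gPDF
  simpa only [Function.comp_def, mul_zero] using this

lemma aux_xexp : Tendsto (fun x : ℝ => x * Real.exp (-x)) atTop (nhds 0) := by
  simpa using tendsto_pow_mul_exp_neg_atTop_nhds_zero 1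

lemma tendsto_mul_gPDF (l : Filter ℝ) (hl : Tendsto (fun v : ℝ => v ^ 2 / 2) l atTop)
    (hev : ∀ᶠ v in l, 2 ≤ |v|) : Tendsto (fun v : ℝ => v * gPDF v) l (nhds 0) := by
  have hg : Tendsto (fun v : ℝ => (Real.sqrt (2 * Real.pi))⁻¹ *
      (v ^ 2 / 2 * Real.exp (-(v ^ 2 / 2)))) l (nhds 0) := by
    have := (aux_xexp.comp hl).const_mul (Real.sqrt (2 * Real.pi))⁻¹
    simpa [Function.comp] using this
  apply squeeze_zero_norm' _ hg
  filter_upwards [hev] with v hv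
  have h1 : |v| ≤ v ^ 2 / 2 := by
    nlinarith [sq_abs v, abs_nonneg v]
  have h2 : 0 < Real.exp (-(v ^ 2 / 2)) := Real.exp_pos _
  have h3 : (0:ℝ) < (Real.sqrt (2 * Real.pi))⁻¹ := by positivity
  have hgp : gPDF v = (Real.sqrt (2 * Real.pi))⁻¹ * Real.exp (-(v ^ 2 / 2)) := by
    unfold gPDF; ring_nf
  have : ‖v * gPDF v‖ = |v| * gPDF v := by
    rw [norm_mul, Real.norm_eq_abs, Real.norm_eq_abs, abs_of_pos (gPDF_pos v)]
  rw [this, hgp]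
  have := mul_le_mul_of_nonneg_right h1 h2.le
  nlinarith

lemma tendsto_sq_half_atBot : Tendsto (fun v : ℝ => v ^ 2 / 2) atBot atTop := by
  have h := tendsto_neg_atBot_atTop.comp tendsto_neg_sq_atBot_bot (α := ℝ)
  refine h.congr fun v => by simp [Function.comp]; ring

lemma mills_atBot : Tendsto (fun v : ℝ => mills v * (mills v - v)) atBot (nhds 0) := by
  have hden : Tendsto (fun v : ℝ => 1 - gCDF v) atBot (nhds 1) := by
    simpa using (tendsto_const_nhds (x := (1:ℝ)) (f := atBot)).sub tendsto_gCDF_atBot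
  have hm : Tendsto mills atBot (nhds 0) := by
    have := tendsto_gPDF_atBot.div hden one_ne_zero
    rw [show mills = gPDF / fun v => 1 - gCDF v from rfl]
    simpa using this
  have hvm : Tendsto (fun v : ℝ => mills v * v) atBot (nhds 0) := by
    have hnum : Tendsto (fun v : ℝ => v * gPDF v) atBot (nhds 0) :=
      tendsto_mul_gPDF atBot tendsto_sq_half_atBot
        (by filter_upwards [eventually_le_atBot (-2:ℝ)] with v hv
            rw [abs_of_nonpos (by linarith)]; linarith)
    have := hnum.div hden one_ne_zero
    simp only [zero_div] at this
    refine this.congr fun v => ?_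
    simp [mills]; ring
  have := (hm.mul hm).sub hvm
  simp only [mul_zero, sub_zero, zero_mul] at this
  refine this.congr fun v => by ring

lemma nonneg_of_deriv_nonpos' {f f' : ℝ → ℝ}
    (hd : ∀ v ∈ Ici (2:ℝ), HasDerivAt f (f' v) v)
    (hd' : ∀ v ∈ Ici (2:ℝ), f' v ≤ 0)
    (hlim : Tendsto f atTop (nhds 0)) : ∀ v ∈ Ici (2:ℝ), 0 ≤ f v := by
  have hanti : AntitoneOn f (Ici 2) := by
    apply antitoneOn_of_deriv_nonpos (convex_Ici 2)
    · exact fun v hv => ((hd v hv).continuousAt).continuousWithinAt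
    · intro v hv
      rw [interior_Ici] at hv
      exact ((hd v (mem_Ici.mpr (le_of_lt hv))).differentiableAt).differentiableWithinAt
    · intro v hv
      rw [interior_Ici] at hv
      rw [(hd v (mem_Ici.mpr (le_of_lt hv))).deriv]
      exact hd' v (mem_Ici.mpr (le_of_lt hv))
  intro v hv
  have : ∀ᶠ t in atTop, f t ≤ f v := by
    filter_upwards [eventually_ge_atTop v] with t ht
    exact hanti hv (le_trans hv ht) ht
  exact le_of_tendsto hlim this

lemma tendsto_inv_pow_zero (n : ℕ) (hn : n ≠ 0) :
    Tendsto (fun x : ℝ => (x ^ n)⁻¹) atTop (nhds 0) :=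
  (tendsto_pow_atTop hn).inv_tendsto_atTop

lemma m_ge_L : ∀ v ∈ Ici (2:ℝ), gPDF v * (v⁻¹ - (v ^ 3)⁻¹) ≤ 1 - gCDF v := by
  have key := nonneg_of_deriv_nonpos'
    (f := fun x : ℝ => (1 - gCDF x) - gPDF x * (x⁻¹ - (x ^ 3)⁻¹))
    (f' := fun v : ℝ => -(3 * gPDF v) / v ^ 4)
    (fun v hv => by
      have hv0 : (0:ℝ) < v := lt_of_lt_of_le two_pos hv
      have ha := hasDerivAt_inv hv0.ne'
      have hb := (hasDerivAt_pow 3 v).inv (by positivity)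
      have h2 := (hasDerivAt_gPDF v).mul (ha.sub hb)
      have h3 := ((hasDerivAt_gCDF v).const_sub 1).sub h2
      refine h3.congr_deriv ?_
      simp only [Pi.sub_apply, Pi.add_apply, Pi.inv_apply]
      field_simp
      ring)
    (fun v hv => by
      have hv0 : (0:ℝ) < v := lt_of_lt_of_le two_pos hv
      have := gPDF_pos v
      apply div_nonpos_of_nonpos_of_nonneg <;> [linarith; positivity])
    ?_
  · intro v hv
    have := key v hv
    linarith
  · have h1 : Tendsto (fun x : ℝ => x⁻¹ - (x ^ 3)⁻¹) atTop (nhds (0 - 0)) :=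
      tendsto_inv_atTop_zero.sub (tendsto_inv_pow_zero 3 (by norm_num))
    have h2 := tendsto_gPDF_atTop.mul h1
    have h3 : Tendsto (fun x : ℝ => 1 - gCDF x) atTop (nhds (1 - 1)) :=
      tendsto_const_nhds.sub tendsto_gCDF_atTop
    have := h3.sub h2
    norm_num at this
    exact this

lemma m_le_U : ∀ v ∈ Ici (2:ℝ), 1 - gCDF v ≤ gPDF v * (v⁻¹ - (v ^ 3)⁻¹ + 3 * (v ^ 5)⁻¹) := by
  have key := nonneg_of_deriv_nonpos'
    (f := fun x : ℝ => gPDF x * (x⁻¹ - (x ^ 3)⁻¹ + 3 * (x ^ 5)⁻¹) - (1 - gCDF x))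
    (f' := fun v : ℝ => -(15 * gPDF v) / v ^ 6)
    (fun v hv => by
      have hv0 : (0:ℝ) < v := lt_of_lt_of_le two_pos hv
      have ha := hasDerivAt_inv hv0.ne'
      have hb := (hasDerivAt_pow 3 v).inv (by positivity)
      have hc := ((hasDerivAt_pow 5 v).inv (by positivity)).const_mul (3:ℝ)
      have h2 := (hasDerivAt_gPDF v).mul ((ha.sub hb).add hc)
      have h3 := h2.sub ((hasDerivAt_gCDF v).const_sub 1)
      refine h3.congr_deriv ?_
      simp only [Pi.sub_apply, Pi.add_apply, Pi.inv_apply]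
      field_simp
      ring)
    (fun v hv => by
      have hv0 : (0:ℝ) < v := lt_of_lt_of_le two_pos hv
      have := gPDF_pos v
      apply div_nonpos_of_nonpos_of_nonneg <;> [linarith; positivity])
    ?_
  · intro v hv
    have := key v hv
    linarith
  · have h1 : Tendsto (fun x : ℝ => x⁻¹ - (x ^ 3)⁻¹ + 3 * (x ^ 5)⁻¹) atTop
        (nhds (0 - 0 + 3 * 0)) :=
      (tendsto_inv_atTop_zero.sub (tendsto_inv_pow_zero 3 (by norm_num))).add
        ((tendsto_inv_pow_zero 5 (by norm_num)).const_mul 3)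
    have h2 := tendsto_gPDF_atTop.mul h1
    have h3 : Tendsto (fun x : ℝ => 1 - gCDF x) atTop (nhds (1 - 1)) :=
      tendsto_const_nhds.sub tendsto_gCDF_atTop
    have := h2.sub h3
    norm_num at this
    exact this

lemma key_bounds : ∀ v ∈ Ici (2:ℝ),
    1 - 3 / v ^ 2 ≤ mills v * (mills v - v) ∧
    mills v * (mills v - v) ≤ v ^ 4 / (v ^ 2 - 1) ^ 2 := by
  intro v hv
  have hv2 : (2:ℝ) ≤ v := hv
  have hv0 : (0:ℝ) < v := by linarith
  have hvv : (0:ℝ) < (v ^ 2 - 1) ^ 2 := by nlinarith [sq_nonneg (v - 1), sq_nonneg (v + 1), sq_nonneg ((v ^ 2 - 1) - 3)]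
  set P := gPDF v with hPdef
  set M := 1 - gCDF v with hMdef
  have hP : 0 < P := gPDF_pos v
  have hM : 0 < M := one_sub_gCDF_pos v
  have hU := m_le_U v hv
  have hL := m_ge_L v hv
  have hq5 : (0:ℝ) < v ^ 5 := by positivity
  have hU' : M * v ^ 5 ≤ P * (v ^ 4 - v ^ 2 + 3) := by
    have h := mul_le_mul_of_nonneg_right hU hq5.le
    calc M * v ^ 5 ≤ P * (v⁻¹ - (v ^ 3)⁻¹ + 3 * (v ^ 5)⁻¹) * v ^ 5 := h
    _ = P * (v ^ 4 - v ^ 2 + 3) := by field_simp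
  have hL' : P * (v ^ 2 - 1) ≤ M * v ^ 3 := by
    have h := mul_le_mul_of_nonneg_right hL (by positivity : (0:ℝ) ≤ v ^ 3)
    calc P * (v ^ 2 - 1) = P * (v⁻¹ - (v ^ 3)⁻¹) * v ^ 3 := by field_simp
    _ ≤ M * v ^ 3 := h
  have h3' : (0:ℝ) ≤ v ^ 2 - 3 := by nlinarith
  have h9 : v * M * v ^ 4 ≤ P * v ^ 4 := by nlinarith [mul_nonneg hP.le h3']
  have hPvM : v * M ≤ P := le_of_mul_le_mul_right h9 (by positivity)
  have hD : mills v * (mills v - v) = P * (P - v * M) / M ^ 2 := by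
    simp only [mills, ← hPdef, ← hMdef]
    field_simp
  constructor
  · -- lower bound
    have hA : 0 ≤ P * (v ^ 4 - v ^ 2 + 3) - M * v ^ 5 := by linarith
    have h4 : 0 ≤ P - v * M := by linarith
    have h5 : 0 ≤ P + v * M := by nlinarith
    have hX : 0 ≤ v ^ 2 * (v ^ 2 * (P * (P - v * M)) - (v ^ 2 - 3) * M ^ 2) := by
      nlinarith [mul_nonneg hP.le hA, mul_nonneg (mul_nonneg h3' h4) h5]
    have hX' : 0 ≤ v ^ 2 * (P * (P - v * M)) - (v ^ 2 - 3) * M ^ 2 :=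
      nonneg_of_mul_nonneg_right hX (by positivity)
    rw [hD, le_div_iff₀ (pow_pos hM 2)]
    have e1 : (1 - 3 / v ^ 2) * M ^ 2 = (v ^ 2 - 3) * M ^ 2 / v ^ 2 := by
      field_simp
    rw [e1, div_le_iff₀ (by positivity)]
    nlinarith [hX']
  · -- upper bound
    have hB : 0 ≤ M * v ^ 3 - P * (v ^ 2 - 1) := by linarith
    have h7 : v ^ 2 * (P - v * M) ≤ P := by nlinarith [hB]
    have h8 : (0:ℝ) ≤ (v ^ 2 - 1) ^ 2 * P := by positivity
    have h10 : (P * (v ^ 2 - 1)) ^ 2 ≤ (M * v ^ 3) ^ 2 := by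
      apply pow_le_pow_left₀ (by nlinarith) hL'
    have h12 := mul_le_mul_of_nonneg_left h7 h8
    have hq2 : (0:ℝ) < v ^ 2 := by positivity
    rw [hD, div_le_div_iff₀ (pow_pos hM 2) hvv]
    have hfin : v ^ 2 * (P * (P - v * M) * (v ^ 2 - 1) ^ 2) ≤ v ^ 2 * (v ^ 4 * M ^ 2) := by
      nlinarith [h12, h10]
    exact le_of_mul_le_mul_left hfin hq2

lemma mills_atTop : Tendsto (fun v : ℝ => mills v * (mills v - v)) atTop (nhds 1) := by
  have hlow : Tendsto (fun v : ℝ => 1 - 3 / v ^ 2) atTop (nhds 1) := by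
    have := (tendsto_inv_pow_zero 2 two_ne_zero).const_mul (3:ℝ)
    have h := tendsto_const_nhds (x := (1:ℝ)) (f := atTop (α := ℝ)) |>.sub this
    norm_num at h
    refine h.congr fun v => by rw [div_eq_mul_inv]
  have hup : Tendsto (fun v : ℝ => v ^ 4 / (v ^ 2 - 1) ^ 2) atTop (nhds 1) := by
    have h1 : Tendsto (fun v : ℝ => (1 - (v ^ 2)⁻¹) ^ 2) atTop (nhds ((1 - 0) ^ 2)) :=
      (tendsto_const_nhds.sub (tendsto_inv_pow_zero 2 two_ne_zero)).pow 2
    norm_num at h1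
    have h2 := h1.inv₀ one_ne_zero
    norm_num at h2
    apply h2.congr' ?_
    filter_upwards [eventually_ge_atTop (2:ℝ)] with v hv
    have hv0 : (0:ℝ) < v := by linarith
    have : v ^ 2 - 1 ≠ 0 := by nlinarith
    field_simp
  refine tendsto_of_tendsto_of_tendsto_of_le_of_le' hlow hup ?_ ?_
  · filter_upwards [eventually_ge_atTop (2:ℝ)] with v hv
    exact (key_bounds v hv).1
  · filter_upwards [eventually_ge_atTop (2:ℝ)] with v hv
    exact (key_bounds v hv).2

end MillsAux

/-- `λ(v)(λ(v) - v)` tends to `0` as `v → -∞` and to `1` as `v → +∞`. -/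
theorem mills_mul_sub_tendsto :
    Filter.Tendsto (fun v : ℝ => mills v * (mills v - v)) Filter.atBot (nhds 0) ∧
    Filter.Tendsto (fun v : ℝ => mills v * (mills v - v)) Filter.atTop (nhds 1) := by
  exact ⟨mills_atBot, mills_atTop⟩
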